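/- arXiv:1208.5751 — 2 statements merged into one kernel-verified Lean document; each statement's English description precedes it below -/
import Mathlib

section
/- Let Ω ⊆ ℂⁿ be a bounded open set, let α ∈ (0,1] and C₀ ≥ 0, and let f : Ω → ℂ be holomorphic on Ω with |f(z) − f(ζ)| ≤ C₀·‖z − ζ‖^α for all z, ζ ∈ Ω. Then for every integer k ≥ 1 there is a constant C (depending only on n, k, α, C₀) such that for all z ∈ Ω, ‖iteratedFDeriv ℂ k f z‖ ≤ C · d(z)^{α − k}, where d(z) = infDist(z, Ωᶜ) is the Euclidean distance from z to the complement of Ω. (Hardy–Littlewood-type estimate: a holomorphic function Lipschitz of order α has k-th derivatives blowing up no faster than d^{α−k}.) -/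
open Set Metric Real
open scoped ContDiff

/-!
A function holomorphic on an open subset of `ℂⁿ` is `C^∞` there: the directional derivative
`D f(z) v` is the circle average of `t ↦ f(z + t v) / t`, and this average can be differentiated
in `z` under the integral sign because the Cauchy estimate `‖D f(y)‖ ≤ 2 sup_{B(y,ρ)} ‖f‖ / ρ`
bounds `D f` locally. Iterating that estimate `k` times on balls of radius `ρ = d(z) / (2k)` and
applying it to `f - f(z)`, which the Hölder condition bounds by `C₀ d(z)^α` on `B(z, d(z))`,
gives `‖Dᵏ f(z)‖ ≤ C₀ (4k)ᵏ d(z)^(α - k)`.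
-/

section CauchyEstimates

variable {E F : Type*} [NormedAddCommGroup E] [NormedSpace ℂ E]
  [NormedAddCommGroup F] [NormedSpace ℂ F]

theorem norm_fderiv_le_of_forall_mem_ball_norm_le {f : E → F} {c : E} {R M : ℝ} (hR : 0 < R)
    (hf : DifferentiableOn ℂ f (ball c R)) (hM : ∀ w ∈ ball c R, ‖f w‖ ≤ M) :
    ‖fderiv ℂ f c‖ ≤ 2 * M / R := by
  refine Complex.norm_fderiv_le_div_of_mapsTo_ball hf (fun w hw => ?_) hR
  rw [mem_closedBall, dist_eq_norm, two_mul]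
  exact (norm_sub_le _ _).trans (add_le_add (hM w hw) (hM c (mem_ball_self hR)))

theorem DifferentiableOn.exists_ball_forall_norm_fderiv_le {f : E → F} {U : Set E}
    (hf : DifferentiableOn ℂ f U) (hU : IsOpen U) {z₀ : E} (hz₀ : z₀ ∈ U) :
    ∃ δ > 0, ∃ C, ball z₀ δ ⊆ U ∧ ∀ y ∈ ball z₀ δ, ‖fderiv ℂ f y‖ ≤ C := by
  have hnear : ∀ᶠ w in nhds z₀, w ∈ U ∧ ‖f w‖ < ‖f z₀‖ + 1 :=
    (hU.eventually_mem hz₀).and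
      ((hf.continuousOn.continuousAt (hU.mem_nhds hz₀)).norm.eventually (gt_mem_nhds (by simp)))
  obtain ⟨ε, hε, hball⟩ := Metric.eventually_nhds_iff_ball.1 hnear
  refine ⟨ε / 2, by positivity, 2 * (‖f z₀‖ + 1) / (ε / 2), ?_, fun y hy => ?_⟩
  · exact fun w hw => (hball w (ball_subset_ball (by linarith) hw)).1
  have hsub : ball y (ε / 2) ⊆ ball z₀ ε := by
    refine ball_subset_ball' ?_
    rw [mem_ball] at hy
    linarith
  exact norm_fderiv_le_of_forall_mem_ball_norm_le (by positivity)
    (hf.mono fun w hw => (hball w (hsub hw)).1) fun w hw => (hball w (hsub hw)).2.le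

theorem norm_iteratedFDerivWithin_le_of_forall_mem_closedBall_norm_le {f : E → F} {s : Set E}
    (hs : IsOpen s) (hf : ContDiffOn ℂ ∞ f s) {ρ M : ℝ} (hρ : 0 < ρ) (i : ℕ) {y : E}
    (hys : closedBall y (i * ρ) ⊆ s) (hM : ∀ w ∈ closedBall y (i * ρ), ‖f w‖ ≤ M) :
    ‖iteratedFDerivWithin ℂ i f s y‖ ≤ M * (2 / ρ) ^ i := by
  induction i generalizing y with
  | zero =>
    simp only [CharP.cast_eq_zero, zero_mul, closedBall_zero, mem_singleton_iff, forall_eq,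
      pow_zero, mul_one, norm_iteratedFDerivWithin_zero] at hM ⊢
    exact hM
  | succ i ih =>
    have hnested : ∀ w ∈ ball y ρ, closedBall w (i * ρ) ⊆ closedBall y ((i + 1 : ℕ) * ρ) :=
      fun w hw => closedBall_subset_closedBall' (by push_cast; linarith [mem_ball.1 hw])
    have hys' : ball y ρ ⊆ s :=
      fun w hw => hys (hnested w hw (mem_closedBall_self (by positivity)))
    have hy : y ∈ s := hys' (mem_ball_self hρ)
    have hdiff : DifferentiableOn ℂ (iteratedFDerivWithin ℂ i f s) (ball y ρ) :=
      (hf.differentiableOn_iteratedFDerivWithin (by exact_mod_cast WithTop.coe_lt_top _)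
        hs.uniqueDiffOn).mono hys'
    calc ‖iteratedFDerivWithin ℂ (i + 1) f s y‖
        = ‖fderiv ℂ (iteratedFDerivWithin ℂ i f s) y‖ := by
          rw [← norm_fderivWithin_iteratedFDerivWithin, fderivWithin_of_isOpen hs hy]
      _ ≤ 2 * (M * (2 / ρ) ^ i) / ρ :=
          norm_fderiv_le_of_forall_mem_ball_norm_le hρ hdiff fun w hw =>
            ih ((hnested w hw).trans hys) fun u hu => hM u (hnested w hw hu)
      _ = M * (2 / ρ) ^ (i + 1) := by ring

end CauchyEstimates

section Regularity

variable {E F : Type*} [NormedAddCommGroup E] [NormedSpace ℂ E]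
  [NormedAddCommGroup F] [NormedSpace ℂ F] [CompleteSpace F]

theorem DifferentiableOn.fderiv_apply_eq_circleAverage {f : E → F} {U : Set E}
    (hf : DifferentiableOn ℂ f U) (hU : IsOpen U) {z v : E} {r : ℝ} (hr : 0 < r)
    (hzr : ∀ t ∈ closedBall (0 : ℂ) r, z + t • v ∈ U) :
    fderiv ℂ f z v = circleAverage (fun t => t⁻¹ • f (z + t • v)) 0 r := by
  set line : ℂ → E := fun t => z + t • v
  have hline : Continuous line := by fun_prop
  have hg : DifferentiableOn ℂ (f ∘ line) (line ⁻¹' U) :=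
    hf.comp (by fun_prop) (mapsTo_preimage _ _)
  have hderiv : HasDerivAt (f ∘ line) (fderiv ℂ f z v) 0 := by
    have hz : U ∈ nhds (line 0) := hU.mem_nhds (hzr 0 (mem_closedBall_self hr.le))
    simpa [line] using (hf.differentiableAt hz).hasFDerivAt.comp_hasDerivAt (0 : ℂ)
      (((hasDerivAt_id (0 : ℂ)).smul_const v).const_add z)
  have hintegrand : ∀ θ, _root_.deriv (circleMap 0 r) θ • ((circleMap 0 r θ - 0) ^ 2)⁻¹ •
      (f ∘ line) (circleMap 0 r θ) =
        Complex.I • (circleMap 0 r θ)⁻¹ • f (line (circleMap 0 r θ)) := by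
    intro θ
    rw [deriv_circleMap, smul_smul, smul_smul, sub_zero]
    congr 1
    field_simp [circleMap_ne_center hr.ne']
  rw [← hderiv.deriv, ← Complex.cderiv_eq_deriv (hU.preimage hline) hg hr hzr, Complex.cderiv,
    circleIntegral, intervalIntegral.integral_congr fun θ _ => hintegrand θ,
    intervalIntegral.integral_smul, smul_smul, circleAverage_def, ← Complex.coe_smul]
  congr 1
  push_cast
  field_simp [Complex.I_ne_zero]

variable [FiniteDimensional ℂ E] [SecondCountableTopology F]

theorem differentiableAt_intervalIntegral_smul_comp_add {f : E → F} {z₀ : E} {δ C : ℝ}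
    (hf : DifferentiableOn ℂ f (ball z₀ δ)) (hC : ∀ y ∈ ball z₀ δ, ‖fderiv ℂ f y‖ ≤ C)
    {κ : ℝ → ℂ} (hκ : Continuous κ) {γ : ℝ → E} (hγ : Continuous γ) (hγδ : ∀ θ, ‖γ θ‖ < δ / 2)
    (a b : ℝ) : DifferentiableAt ℂ (fun z => ∫ θ in a..b, κ θ • f (z + γ θ)) z₀ := by
  borelize E
  have hδ : 0 < δ / 2 := (norm_nonneg _).trans_lt (hγδ 0)
  have hmem : ∀ z ∈ ball z₀ (δ / 2), ∀ θ, z + γ θ ∈ ball z₀ δ := fun z hz θ => by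
    rw [mem_ball, dist_eq_norm, add_sub_right_comm] at *
    linarith [norm_add_le (z - z₀) (γ θ), hγδ θ]
  have hcont : ∀ z ∈ ball z₀ (δ / 2), Continuous fun θ => κ θ • f (z + γ θ) := fun z hz =>
    hκ.smul (hf.continuousOn.comp_continuous (continuous_const.add hγ) (hmem z hz))
  have hderiv : ∀ z ∈ ball z₀ (δ / 2), ∀ θ, HasFDerivAt (fun z => κ θ • f (z + γ θ))
      (κ θ • fderiv ℂ f (z + γ θ)) z := fun z hz θ =>
    (((hf.differentiableAt (isOpen_ball.mem_nhds (hmem z hz θ))).hasFDerivAt).comp z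
      ((hasFDerivAt_id z).add_const (γ θ))).const_smul (κ θ)
  refine (intervalIntegral.hasFDerivAt_integral_of_dominated_of_fderiv_le
    (F' := fun z θ => κ θ • fderiv ℂ f (z + γ θ)) (bound := fun θ => ‖κ θ‖ * C)
    (ball_mem_nhds z₀ hδ) ?_ ?_ ?_ ?_ ?_ ?_).differentiableAt
  · filter_upwards [ball_mem_nhds z₀ hδ] with z hz
    exact (hcont z hz).aestronglyMeasurable
  · exact (hcont z₀ (mem_ball_self hδ)).intervalIntegrable a b
  · exact hκ.aestronglyMeasurable.smul
      ((measurable_fderiv ℂ f).comp (continuous_const.add hγ).measurable).aestronglyMeasurable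
  · refine Filter.Eventually.of_forall fun θ _ z hz => ?_
    rw [norm_smul]
    exact mul_le_mul_of_nonneg_left (hC _ (hmem z hz θ)) (norm_nonneg _)
  · exact (hκ.norm.mul continuous_const).intervalIntegrable a b
  · exact Filter.Eventually.of_forall fun θ _ z hz => hderiv z hz θ

theorem DifferentiableOn.differentiableOn_fderiv_apply {f : E → F} {U : Set E}
    (hf : DifferentiableOn ℂ f U) (hU : IsOpen U) (v : E) :
    DifferentiableOn ℂ (fun z => fderiv ℂ f z v) U := by
  intro z₀ hz₀
  obtain ⟨δ, hδ, C, hδU, hC⟩ := hf.exists_ball_forall_norm_fderiv_le hU hz₀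
  set r := δ / (2 * (‖v‖ + 1))
  have hr : 0 < r := by positivity
  have hrv : r * ‖v‖ < δ / 2 := by
    rw [div_mul_eq_mul_div, div_lt_div_iff₀ (by positivity) two_pos]
    nlinarith
  have hcircle : ∀ θ, ‖circleMap 0 r θ • v‖ < δ / 2 := fun θ => by
    rwa [norm_smul, norm_circleMap_zero, abs_of_pos hr]
  have hrep : ∀ z ∈ ball z₀ (δ / 2),
      fderiv ℂ f z v = circleAverage (fun t => t⁻¹ • f (z + t • v)) 0 r := by
    refine fun z hz => hf.fderiv_apply_eq_circleAverage hU hr fun t ht => hδU ?_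
    rw [mem_ball, dist_eq_norm, add_sub_right_comm] at *
    have : ‖t • v‖ ≤ r * ‖v‖ := by
      rw [norm_smul]
      exact mul_le_mul_of_nonneg_right (mem_closedBall_zero_iff.1 ht) (norm_nonneg _)
    linarith [norm_add_le (z - z₀) (t • v)]
  have hcont : Continuous fun θ => (circleMap 0 r θ)⁻¹ :=
    (continuous_circleMap 0 r).inv₀ fun θ => circleMap_ne_center hr.ne'
  refine DifferentiableAt.differentiableWithinAt ?_
  refine ((differentiableAt_intervalIntegral_smul_comp_add (hf.mono hδU) hC hcont
    (by fun_prop) hcircle 0 (2 * π)).const_smul (2 * π)⁻¹).congr_of_eventuallyEq ?_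
  filter_upwards [ball_mem_nhds z₀ (half_pos hδ)] using hrep

theorem DifferentiableOn.contDiffOn_of_finiteDimensional {f : E → F} {U : Set E}
    (hf : DifferentiableOn ℂ f U) (hU : IsOpen U) : ContDiffOn ℂ ∞ f U := by
  suffices ∀ n : ℕ, ∀ f : E → F, DifferentiableOn ℂ f U → ContDiffOn ℂ n f U from
    contDiffOn_infty.2 fun n => this n f hf
  intro n
  induction n with
  | zero => exact fun f hf => contDiffOn_zero.2 hf.continuousOn
  | succ n ih =>
    intro f hf
    push_cast
    refine contDiffOn_succ_of_fderiv_apply hf (by simp) fun v => ih _ ?_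
    exact (hf.differentiableOn_fderiv_apply hU v).congr fun z hz => by
      rw [fderivWithin_of_isOpen hU hz]

end Regularity

theorem iteratedFDerivWithin_eq_zero_of_subsingleton {𝕜 E F : Type*} [NontriviallyNormedField 𝕜]
    [NormedAddCommGroup E] [NormedSpace 𝕜 E] [Subsingleton E] [NormedAddCommGroup F]
    [NormedSpace 𝕜 F] {k : ℕ} (hk : k ≠ 0) (f : E → F) (s : Set E) (x : E) :
    iteratedFDerivWithin 𝕜 k f s x = 0 := by
  ext m
  exact (iteratedFDerivWithin 𝕜 k f s x).map_coord_zero ⟨0, Nat.pos_of_ne_zero hk⟩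
    (Subsingleton.elim _ _)

theorem iteratedFDerivWithin_sub_const_apply {𝕜 E F : Type*} [NontriviallyNormedField 𝕜]
    [NormedAddCommGroup E] [NormedSpace 𝕜 E] [NormedAddCommGroup F] [NormedSpace 𝕜 F]
    {k : ℕ} (hk : k ≠ 0) {f : E → F} {s : Set E} {x : E} (hf : ContDiffWithinAt 𝕜 k f s x)
    (hs : UniqueDiffOn 𝕜 s) (hx : x ∈ s) (c : F) :
    iteratedFDerivWithin 𝕜 k (fun w => f w - c) s x = iteratedFDerivWithin 𝕜 k f s x := by
  rw [← Pi.sub_def, iteratedFDerivWithin_sub_apply hf contDiffWithinAt_const hs hx,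
    iteratedFDerivWithin_const_of_ne hk, Pi.zero_apply, sub_zero]

theorem Bornology.IsBounded.infDist_compl_pos {E : Type*} [NormedAddCommGroup E]
    [NormedSpace ℝ E] [Nontrivial E] {Ω : Set E} (hb : Bornology.IsBounded Ω) (hΩ : IsOpen Ω)
    {z : E} (hz : z ∈ Ω) : 0 < infDist z Ωᶜ := by
  have hne : Ωᶜ.Nonempty :=
    nonempty_compl.2 fun h => NormedSpace.unbounded_univ ℝ E (h ▸ hb)
  rw [← hΩ.isClosed_compl.notMem_iff_infDist_pos hne]
  simpa using hz

theorem holomorphic_lipschitz_deriv_bound_general (n k : ℕ) (hk : 1 ≤ k)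
    (α : ℝ) (hα0 : 0 < α) (C₀ : ℝ) (hC₀ : 0 ≤ C₀) :
    ∃ C : ℝ, ∀ Ω : Set (EuclideanSpace ℂ (Fin n)), IsOpen Ω → Bornology.IsBounded Ω →
      ∀ f : EuclideanSpace ℂ (Fin n) → ℂ, DifferentiableOn ℂ f Ω →
      (∀ z ∈ Ω, ∀ ζ ∈ Ω, ‖f z - f ζ‖ ≤ C₀ * ‖z - ζ‖ ^ α) →
      ∀ z ∈ Ω, ‖iteratedFDerivWithin ℂ k f Ω z‖ ≤ C * infDist z Ωᶜ ^ (α - (k : ℝ)) := by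
  refine ⟨C₀ * (4 * k) ^ k, fun Ω hΩ hΩb f hf hf_holder z hz => ?_⟩
  have hk0 : k ≠ 0 := by omega
  -- In `ℂ⁰` the bounded set `Ω` may be everything, and then `d(z) = 0`.
  rcases subsingleton_or_nontrivial (EuclideanSpace ℂ (Fin n)) with hE | hE
  · rw [iteratedFDerivWithin_eq_zero_of_subsingleton hk0, norm_zero]
    exact mul_nonneg (by positivity) (rpow_nonneg infDist_nonneg _)
  set d := infDist z Ωᶜ
  have hd : 0 < d := hΩb.infDist_compl_pos hΩ hz
  set ρ := d / (2 * k)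
  have hρ : 0 < ρ := by positivity
  have hball : closedBall z (k * ρ) ⊆ ball z d := closedBall_subset_ball (by
    simp only [ρ]; field_simp; linarith)
  have hΩ_ball : closedBall z (k * ρ) ⊆ Ω := hball.trans ball_infDist_compl_subset
  have hosc : ∀ w ∈ closedBall z (k * ρ), ‖f w - f z‖ ≤ C₀ * d ^ α := fun w hw => by
    refine (hf_holder w (hΩ_ball hw) z hz).trans ?_
    gcongr
    exact (mem_ball_iff_norm.1 (hball hw)).le
  have hsmooth : ContDiffOn ℂ ∞ f Ω := hf.contDiffOn_of_finiteDimensional hΩ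
  have hshift := iteratedFDerivWithin_sub_const_apply hk0
    (hsmooth.of_le (by exact_mod_cast le_top) z hz) hΩ.uniqueDiffOn hz (f z)
  calc ‖iteratedFDerivWithin ℂ k f Ω z‖
      ≤ C₀ * d ^ α * (2 / ρ) ^ k := hshift ▸
        norm_iteratedFDerivWithin_le_of_forall_mem_closedBall_norm_le hΩ
          (hsmooth.sub contDiffOn_const) hρ k hΩ_ball hosc
    _ = C₀ * (4 * k) ^ k * d ^ (α - k) := by
        have h2ρ : 2 / ρ = 4 * k / d := by simp only [ρ]; field_simp; ring
        rw [h2ρ, rpow_sub hd, rpow_natCast, div_pow]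
        field_simp

/-- **Hardy–Littlewood-type estimate.**  A function holomorphic on a bounded open set
`Ω ⊆ ℂⁿ` and Lipschitz of order `α ∈ (0,1]` with constant `C₀` has `k`-th derivatives
(`k ≥ 1`) blowing up no faster than `d(z)^{α−k}`, with a constant depending only on
`n`, `k`, `α` and `C₀`. -/
theorem holomorphic_lipschitz_deriv_bound (n k : ℕ) (hk : 1 ≤ k)
    (α : ℝ) (hα0 : 0 < α) (hα1 : α ≤ 1) (C₀ : ℝ) (hC₀ : 0 ≤ C₀) :
    ∃ C : ℝ, ∀ Ω : Set (EuclideanSpace ℂ (Fin n)), IsOpen Ω → Bornology.IsBounded Ω →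
      ∀ f : EuclideanSpace ℂ (Fin n) → ℂ, DifferentiableOn ℂ f Ω →
      (∀ z ∈ Ω, ∀ ζ ∈ Ω, ‖f z - f ζ‖ ≤ C₀ * ‖z - ζ‖ ^ α) →
      ∀ z ∈ Ω, ‖iteratedFDerivWithin ℂ k f Ω z‖ ≤ C * infDist z Ωᶜ ^ (α - (k : ℝ)) :=
  holomorphic_lipschitz_deriv_bound_general n k hk α hα0 C₀ hC₀
end

section
/- Let Ω ⊆ ℂⁿ be a bounded open set and p ∈ frontier Ω. Assume there exist a unit vector ν ∈ ℂⁿ and constants κ > 0, s₀ > 0 such that for every 0 < s < s₀ one has p − s·ν ∈ Ω and infDist(p − s·ν, Ωᶜ) ≥ κ·s (an interior normal condition, valid at every boundary point of a smoothly bounded domain). Let U : ℂⁿ → ℂ satisfy a Lipschitz condition of order 1 on closure Ω, and suppose there exist c > 0 and ε ∈ (0,1) with |U(w)| ≥ c · (infDist(w, Ωᶜ))^{1−ε} for every w ∈ Ω. Then U(p) ≠ 0. (Consequently, a function smooth up to the boundary which dominates a power d^{1−ε} of the boundary distance from inside cannot vanish at the boundary.) -/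
open Set Metric

/-- **Nonvanishing at the boundary.**  Let `p` be a boundary point of a bounded open set
`Ω ⊆ ℂⁿ` admitting an interior normal segment (`p − sν ∈ Ω` with `infDist (p − sν) Ωᶜ ≥ κs`
for small `s > 0`).  If `U` is Lipschitz of order `1` on `closure Ω` and satisfies the lower
bound `|U(w)| ≥ c d(w)^{1−ε}` on `Ω` for some `ε ∈ (0,1)`, then `U(p) ≠ 0`. -/
theorem ne_zero_at_boundary_of_lower_bound {n : ℕ}
    (Ω : Set (EuclideanSpace ℂ (Fin n)))
    (hΩo : IsOpen Ω) (hΩb : Bornology.IsBounded Ω)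
    (p : EuclideanSpace ℂ (Fin n)) (hp : p ∈ frontier Ω)
    (ν : EuclideanSpace ℂ (Fin n)) (hν : ‖ν‖ = 1)
    (κ s₀ : ℝ) (hκ : 0 < κ) (hs₀ : 0 < s₀)
    (hnormal : ∀ s : ℝ, 0 < s → s < s₀ →
      p - s • ν ∈ Ω ∧ κ * s ≤ infDist (p - s • ν) Ωᶜ)
    (U : EuclideanSpace ℂ (Fin n) → ℂ) (CU : ℝ) (hCU : 0 ≤ CU)
    (hUlip : ∀ z ∈ closure Ω, ∀ ζ ∈ closure Ω, ‖U z - U ζ‖ ≤ CU * ‖z - ζ‖)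
    (c ε : ℝ) (hc : 0 < c) (hε0 : 0 < ε) (hε1 : ε < 1)
    (hlow : ∀ w ∈ Ω, c * infDist w Ωᶜ ^ (1 - ε) ≤ ‖U w‖) :
    U p ≠ 0 := by
  intro hU0
  set A := c * κ ^ (1 - ε) with hA
  have hA0 : 0 < A := mul_pos hc (Real.rpow_pos_of_pos hκ _)
  -- choose a small s
  set t := (A / (CU + 1)) ^ (1 / ε) with ht
  have ht0 : 0 < t := Real.rpow_pos_of_pos (div_pos hA0 (by linarith)) _
  set s := min (s₀ / 2) t with hs
  have hs0 : 0 < s := lt_min (by linarith) ht0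
  have hss₀ : s < s₀ := lt_of_le_of_lt (min_le_left _ _) (by linarith)
  obtain ⟨hmem, hdist⟩ := hnormal s hs0 hss₀
  have hpcl : p ∈ closure Ω := hp.1
  have hwcl : p - s • ν ∈ closure Ω := subset_closure hmem
  -- upper bound via Lipschitz
  have hup : ‖U (p - s • ν)‖ ≤ CU * s := by
    have := hUlip (p - s • ν) hwcl p hpcl
    rw [hU0, sub_zero] at this
    have hnorm : ‖p - s • ν - p‖ = s := by
      rw [sub_sub_cancel_left, norm_neg, norm_smul, hν, mul_one,
        Real.norm_eq_abs, abs_of_pos hs0]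
    rwa [hnorm] at this
  -- lower bound
  have hlo : A * s ^ (1 - ε) ≤ ‖U (p - s • ν)‖ := by
    refine le_trans ?_ (hlow _ hmem)
    have h1 : (κ * s) ^ (1 - ε) ≤ infDist (p - s • ν) Ωᶜ ^ (1 - ε) :=
      Real.rpow_le_rpow (by positivity) hdist (by linarith)
    have h2 : (κ * s) ^ (1 - ε) = κ ^ (1 - ε) * s ^ (1 - ε) :=
      Real.mul_rpow hκ.le hs0.le
    rw [hA, mul_assoc]
    exact mul_le_mul_of_nonneg_left (by rw [← h2]; exact h1) hc.le
  -- the key strict inequality : CU * s < A * s^(1-ε)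
  have hsε : s ^ ε ≤ A / (CU + 1) := by
    calc s ^ ε ≤ t ^ ε :=
          Real.rpow_le_rpow hs0.le (min_le_right _ _) hε0.le
      _ = A / (CU + 1) := by
          rw [ht, ← Real.rpow_mul (div_pos hA0 (by linarith)).le,
            one_div_mul_cancel hε0.ne', Real.rpow_one]
  have hkey : CU * s < A * s ^ (1 - ε) := by
    have hsplit : s = s ^ ε * s ^ (1 - ε) := by
      have h1 : ε + (1 - ε) = 1 := by ring
      rw [← Real.rpow_add hs0, h1, Real.rpow_one]
    calc CU * s = CU * s ^ ε * s ^ (1 - ε) := by rw [mul_assoc, ← hsplit]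
      _ < A * s ^ (1 - ε) := by
          have h3 : CU * s ^ ε < A := by
            calc CU * s ^ ε ≤ CU * (A / (CU + 1)) :=
                  mul_le_mul_of_nonneg_left hsε hCU
              _ < (CU + 1) * (A / (CU + 1)) := by
                  have := div_pos hA0 (show (0:ℝ) < CU + 1 by linarith)
                  nlinarith
              _ = A := by field_simp
          exact mul_lt_mul_of_pos_right h3 (Real.rpow_pos_of_pos hs0 _)
  linarith
end
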